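/- For all integers n, m ≥ 2, the super edge-magic deficiency of K_{1,n} + K̄_m satisfies ⌈(n−1)(m−1)/2⌉ ≤ μ_s(K_{1,n} + K̄_m) ≤ n(m−1) − 1. -/

import Mathlib

/-!
Lower bound: in a super edge-magic graph with `p` vertices and `q` edges the edge sums
`f x + f y` are distinct and lie in `[3, 2p - 1]`, so `q ≤ 2p - 3`; for
`K_{1,n} + K̄_m ∪ tK₁` this reads `(n - 1)(m - 1) ≤ 2t`.

Upper bound: label the centre `n + 2`, the leaves `2, …, n + 1` and the other side
`1, 2(n + 1), …, m(n + 1)`. The edge sums are then exactly `3, …, q + 2`, and all labels lie in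
`[1, m(n + 1)]`, so adding `m(n + 1) - (n + m + 1) = n(m - 1) - 1` isolated vertices carrying the
unused labels gives a super edge-magic graph.
-/

open SimpleGraph

/-- A super edge-magic labeling of `G` with magic constant `k`: a bijection from
vertices and edges onto `{1, …, p+q}` sending vertices onto `{1, …, p}`, with
`f x + f (xy) + f y = k` for every edge `xy`. -/
def IsSEMWith {V : Type*} [Fintype V] (G : SimpleGraph V) (k : ℕ) : Prop :=
  ∃ (f : V → ℕ) (g : G.edgeSet → ℕ),
    Function.Injective (Sum.elim f g) ∧
    Set.range (Sum.elim f g) = Set.Icc 1 (Fintype.card V + G.edgeSet.ncard) ∧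
    Set.range f = Set.Icc 1 (Fintype.card V) ∧
    ∀ (x y : V) (h : G.Adj x y), f x + g ⟨s(x, y), G.mem_edgeSet.mpr h⟩ + f y = k

/-- `G` is super edge-magic. -/
def IsSEM {V : Type*} [Fintype V] (G : SimpleGraph V) : Prop :=
  ∃ k : ℕ, IsSEMWith G k

/-- The graph `G ∪ t K₁`: `G` together with `t` added isolated vertices. -/
def unionIsolated {V : Type*} (G : SimpleGraph V) (t : ℕ) : SimpleGraph (V ⊕ Fin t) :=
  G.map Function.Embedding.inl

/-- The super edge-magic deficiency `μₛ(G)`: the least `t` such that `G ∪ t K₁`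
is super edge-magic, or `⊤` if there is no such `t`. -/
noncomputable def semDeficiency {V : Type*} [Fintype V] (G : SimpleGraph V) : ℕ∞ :=
  sInf ((fun t : ℕ => (t : ℕ∞)) '' {t : ℕ | IsSEM (unionIsolated G t)})

/-- `H n`: the wheel `W_n` (hub `0`, rim `1, …, n`) minus the spoke `{0, 1}`. -/
def wheelMinusSpoke (n : ℕ) : SimpleGraph (Fin (n + 1)) :=
  SimpleGraph.fromRel (fun i j =>
    ((i : ℕ) = 0 ∧ 2 ≤ (j : ℕ)) ∨
    ((j : ℕ) = (i : ℕ) + 1 ∧ 1 ≤ (i : ℕ)) ∨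
    ((i : ℕ) = n ∧ (j : ℕ) = 1))

/-- The join `P_n + K̄_m`: a path `u_1 … u_n` plus `m` vertices joined to every `u_i`. -/
def pathJoin (n m : ℕ) : SimpleGraph (Fin n ⊕ Fin m) :=
  SimpleGraph.fromRel (fun a b =>
    (∃ i j : Fin n, a = Sum.inl i ∧ b = Sum.inl j ∧ (j : ℕ) = (i : ℕ) + 1) ∨
    (∃ (i : Fin n) (j : Fin m), a = Sum.inl i ∧ b = Sum.inr j))

/-- The join `K_{1,n} + K̄_m`: a star with center `Sum.inl 0` and leaves
`Sum.inl i`, `i ≠ 0`, plus `m` vertices joined to all star vertices. -/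
def starJoin (n m : ℕ) : SimpleGraph (Fin (n + 1) ⊕ Fin m) :=
  SimpleGraph.fromRel (fun a b =>
    (∃ i : Fin (n + 1), a = Sum.inl 0 ∧ b = Sum.inl i ∧ i ≠ 0) ∨
    (∃ (i : Fin (n + 1)) (j : Fin m), a = Sum.inl i ∧ b = Sum.inr j))

/-- The join `C_n + K̄_m`: a cycle `u_1 … u_n` plus `m` vertices joined to every `u_i`. -/
def cycleJoin (n m : ℕ) : SimpleGraph (Fin n ⊕ Fin m) :=
  SimpleGraph.fromRel (fun a b =>
    (∃ i j : Fin n, a = Sum.inl i ∧ b = Sum.inl j ∧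
      ((j : ℕ) = (i : ℕ) + 1 ∨ ((i : ℕ) = n - 1 ∧ (j : ℕ) = 0))) ∨
    (∃ (i : Fin n) (j : Fin m), a = Sum.inl i ∧ b = Sum.inr j))

/-- The join `G + K̄_m`: `G` plus `m` new vertices joined to every vertex of `G`. -/
def joinIsolated {V : Type*} (G : SimpleGraph V) (m : ℕ) : SimpleGraph (V ⊕ Fin m) :=
  SimpleGraph.fromRel (fun a b =>
    (∃ x y : V, a = Sum.inl x ∧ b = Sum.inl y ∧ G.Adj x y) ∨
    (∃ (x : V) (j : Fin m), a = Sum.inl x ∧ b = Sum.inr j))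

open Function

section SuperEdgeMagic

variable {V : Type*}

def edgeSum (f : V → ℕ) : Sym2 V → ℕ :=
  Sym2.lift ⟨fun a b => f a + f b, fun _ _ => Nat.add_comm _ _⟩

@[simp]
lemma edgeSum_mk (f : V → ℕ) (a b : V) : edgeSum f s(a, b) = f a + f b := rfl

lemma edgeSum_map {W : Type*} (f : W → ℕ) (g : V → W) (e : Sym2 V) :
    edgeSum f (e.map g) = edgeSum (f ∘ g) e := by
  induction e using Sym2.ind
  rfl

lemma Nat.eq_and_eq_of_mul_add_eq_mul_add {b q q' r r' : ℕ} (hr : r < b) (hr' : r' < b)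
    (h : b * q + r = b * q' + r') : q = q' ∧ r = r' := by
  have hb : 0 < b := by omega
  obtain ⟨hq, hr⟩ := (Nat.div_mod_unique hb).2 ⟨Nat.add_comm r (b * q), hr⟩
  obtain ⟨hq', hr'⟩ := (Nat.div_mod_unique hb).2 ⟨Nat.add_comm r' (b * q'), hr'⟩
  rw [h] at hq hr
  exact ⟨hq.symm.trans hq', hr.symm.trans hr'⟩

lemma range_eq_Icc_of_injective {α : Type*} [Finite α] {f : α → ℕ} (hf : Injective f)
    (hmem : ∀ a, f a ∈ Set.Icc 1 (Nat.card α)) : Set.range f = Set.Icc 1 (Nat.card α) := by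
  refine Set.eq_of_subset_of_ncard_le (Set.range_subset_iff.2 hmem) ?_ (Set.finite_Icc _ _)
  rw [Set.ncard_Icc_nat, Set.ncard_range_of_injective hf]
  omega

lemma ncard_edgeSet_unionIsolated (G : SimpleGraph V) (t : ℕ) :
    (unionIsolated G t).edgeSet.ncard = G.edgeSet.ncard := by
  rw [unionIsolated, edgeSet_map, Set.ncard_image_of_injective _ (Embedding.injective _)]

variable [Fintype V]

lemma IsSEM.ncard_edgeSet_le {G : SimpleGraph V} (hG : IsSEM G) :
    G.edgeSet.ncard ≤ 2 * Fintype.card V - 3 := by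
  obtain ⟨k, f, g, hinj, -, hf, hmagic⟩ := hG
  have hf_mem : ∀ v, f v ∈ Set.Icc 1 (Fintype.card V) := fun v => hf ▸ Set.mem_range_self v
  have hsum : ∀ e : G.edgeSet, edgeSum f e + g e = k := by
    rintro ⟨e, he⟩
    induction e using Sym2.ind with
    | _ x y => have := hmagic x y he; simp only [edgeSum_mk]; omega
  have hinjOn : Set.InjOn (edgeSum f) G.edgeSet := by
    intro e he e' he' h
    have hg : g ⟨e, he⟩ = g ⟨e', he'⟩ := by
      have := hsum ⟨e, he⟩; have := hsum ⟨e', he'⟩; simp only at *; omega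
    simpa using hinj (a₁ := .inr ⟨e, he⟩) (a₂ := .inr ⟨e', he'⟩) hg
  have hmaps : ∀ e ∈ G.edgeSet, edgeSum f e ∈ Set.Icc 3 (2 * Fintype.card V - 1) := by
    intro e he
    induction e using Sym2.ind with
    | _ x y =>
      have hne : f x ≠ f y := fun h =>
        (G.mem_edgeSet.1 he).ne (by simpa using hinj (a₁ := .inl x) (a₂ := .inl y) h)
      have := hf_mem x; have := hf_mem y
      simp only [edgeSum_mk, Set.mem_Icc] at *
      omega
  have := Set.ncard_le_ncard_of_injOn _ hmaps hinjOn
  rw [Set.ncard_Icc_nat] at this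
  omega

theorem isSEM_of_labeling (G : SimpleGraph V) {f : V → ℕ} (hf : Injective f)
    (hf_mem : ∀ v, f v ∈ Set.Icc 1 (Fintype.card V)) {s : ℕ}
    (hsum : Set.InjOn (edgeSum f) G.edgeSet)
    (hsum_mem : ∀ e ∈ G.edgeSet, edgeSum f e ∈ Set.Ico s (s + G.edgeSet.ncard)) :
    IsSEM G := by
  let k := Fintype.card V + G.edgeSet.ncard + s
  let g : G.edgeSet → ℕ := fun e => k - edgeSum f e
  have hg_mem : ∀ e, g e ∈ Set.Icc (Fintype.card V + 1) (Fintype.card V + G.edgeSet.ncard) :=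
    fun e => by
      have := hsum_mem e e.2
      simp only [Set.mem_Icc, Set.mem_Ico, g, k] at *
      omega
  have hinj : Injective (Sum.elim f g) := by
    refine hf.sumElim (fun e e' h => Subtype.ext (hsum e.2 e'.2 ?_)) fun v e => ?_
    · have := hsum_mem e e.2; have := hsum_mem e' e'.2
      simp only [g, k, Set.mem_Ico] at *
      omega
    · have := hf_mem v; have := hg_mem e
      simp only [Set.mem_Icc] at *
      omega
  have hcard : Nat.card (V ⊕ G.edgeSet) = Fintype.card V + G.edgeSet.ncard := by
    rw [Nat.card_sum, Nat.card_coe_set_eq, Nat.card_eq_fintype_card]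
  refine ⟨k, f, g, hinj, ?_, ?_, fun x y h => ?_⟩
  · rw [← hcard]
    refine range_eq_Icc_of_injective hinj ?_
    rintro (v | e)
    · have := hf_mem v; simp only [Sum.elim_inl, Set.mem_Icc] at *; omega
    · have := hg_mem e; simp only [Sum.elim_inr, Set.mem_Icc] at *; omega
  · rw [← Nat.card_eq_fintype_card] at hf_mem ⊢
    exact range_eq_Icc_of_injective hf hf_mem
  · have := hsum_mem _ (G.mem_edgeSet.2 h)
    simp only [edgeSum_mk, Set.mem_Ico, g, k] at *
    omega

lemma exists_injective_sumElim_mem_Icc {f : V → ℕ} (hf : Injective f) {t : ℕ}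
    (hf_mem : ∀ v, f v ∈ Set.Icc 1 (Fintype.card V + t)) :
    ∃ h : Fin t → ℕ, Injective (Sum.elim f h) ∧
      ∀ x, Sum.elim f h x ∈ Set.Icc 1 (Fintype.card V + t) := by
  classical
  set S := Finset.Icc 1 (Fintype.card V + t) \ Finset.univ.image f
  have hS : S.card = t := by
    rw [Finset.card_sdiff_of_subset, Nat.card_Icc, Finset.card_image_of_injective _ hf,
      Finset.card_univ]
    · omega
    · simpa [Finset.subset_iff] using hf_mem
  let e := (Finset.equivFinOfCardEq hS).symm
  refine ⟨fun k => e k, hf.sumElim (Subtype.val_injective.comp e.injective) fun v k => ?_, ?_⟩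
  · have := (Finset.mem_sdiff.1 (e k).2).2
    simp only [Finset.mem_image, Finset.mem_univ, true_and, not_exists] at this
    exact this v
  · rintro (v | k)
    · exact hf_mem v
    · simpa using (Finset.mem_sdiff.1 (e k).2).1

theorem isSEM_unionIsolated_of_labeling (G : SimpleGraph V) (t : ℕ) {f : V → ℕ}
    (hf : Injective f) (hf_mem : ∀ v, f v ∈ Set.Icc 1 (Fintype.card V + t)) {s : ℕ}
    (hsum : Set.InjOn (edgeSum f) G.edgeSet)
    (hsum_mem : ∀ e ∈ G.edgeSet, edgeSum f e ∈ Set.Ico s (s + G.edgeSet.ncard)) :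
    IsSEM (unionIsolated G t) := by
  obtain ⟨h, hinj, hmem⟩ := exists_injective_sumElim_mem_Icc hf hf_mem
  have hE : (unionIsolated G t).edgeSet = Sym2.map Sum.inl '' G.edgeSet :=
    edgeSet_map Embedding.inl G
  refine isSEM_of_labeling _ hinj (by simpa [Fintype.card_sum] using hmem) (s := s) ?_ ?_
  · rw [hE]
    rintro _ ⟨e, he, rfl⟩ _ ⟨e', he', rfl⟩ hee
    rw [edgeSum_map, edgeSum_map, Sum.elim_comp_inl] at hee
    rw [hsum he he' hee]
  · rw [ncard_edgeSet_unionIsolated, hE]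
    rintro _ ⟨e, he, rfl⟩
    rw [edgeSum_map, Sum.elim_comp_inl]
    exact hsum_mem e he

end SuperEdgeMagic

def starJoinEdge (n m : ℕ) : Fin n ⊕ Fin (n + 1) × Fin m → Sym2 (Fin (n + 1) ⊕ Fin m) :=
  Sum.elim (fun i => s(.inl 0, .inl i.succ)) fun p => s(.inl p.1, .inr p.2)

lemma starJoinEdge_injective (n m : ℕ) : Injective (starJoinEdge n m) := by
  rintro (i | ⟨i, j⟩) (i' | ⟨i', j'⟩) h <;>
    simp [starJoinEdge, Fin.succ_ne_zero, eq_comm (a := (0 : Fin (n + 1)))] at h ⊢ <;>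
    simp_all

lemma range_starJoinEdge (n m : ℕ) : Set.range (starJoinEdge n m) = (starJoin n m).edgeSet := by
  ext e
  induction e using Sym2.ind with
  | _ a b =>
    constructor
    · rintro ⟨i | ⟨i, j⟩, he⟩ <;> rw [← he] <;>
        simp [starJoinEdge, starJoin, (Fin.succ_ne_zero _).symm]
    · simp only [mem_edgeSet, starJoin, fromRel_adj]
      rintro ⟨-, (⟨i, rfl, rfl, hi⟩ | ⟨i, j, rfl, rfl⟩) |
        (⟨i, rfl, rfl, hi⟩ | ⟨i, j, rfl, rfl⟩)⟩
      · exact ⟨.inl (i.pred hi), by simp [starJoinEdge]⟩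
      · exact ⟨.inr (i, j), rfl⟩
      · exact ⟨.inl (i.pred hi), by simp [starJoinEdge, Sym2.eq_swap]⟩
      · exact ⟨.inr (i, j), Sym2.eq_swap⟩

lemma ncard_edgeSet_starJoin (n m : ℕ) : (starJoin n m).edgeSet.ncard = n + (n + 1) * m := by
  rw [← range_starJoinEdge, Set.ncard_range_of_injective (starJoinEdge_injective n m)]
  simp

def starLabel (n : ℕ) (i : Fin (n + 1)) : ℕ := if (i : ℕ) = 0 then n + 2 else i + 1

/-- Adding the star labels `2, …, n + 2` to these gives consecutive blocks of sums; the
centre-leaf sums `n + 4, …, 2n + 3` fill the gap between the first two blocks. -/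
def indepLabel (n : ℕ) {m : ℕ} (j : Fin m) : ℕ :=
  if (j : ℕ) = 0 then 1 else (n + 1) * (j + 1)

def starJoinLabel (n m : ℕ) : Fin (n + 1) ⊕ Fin m → ℕ :=
  Sum.elim (starLabel n) (indepLabel n)

lemma starLabel_mem (n : ℕ) (i : Fin (n + 1)) : starLabel n i ∈ Set.Icc 2 (n + 2) := by
  have := i.is_lt
  unfold starLabel
  split_ifs <;> simp only [Set.mem_Icc] <;> omega

lemma starLabel_injective (n : ℕ) : Injective (starLabel n) := by
  intro i i' h
  have := i.is_lt; have := i'.is_lt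
  unfold starLabel at h
  split_ifs at h <;> omega

lemma two_mul_le_indepLabel {n m : ℕ} {j : Fin m} (hj : (j : ℕ) ≠ 0) :
    2 * (n + 1) ≤ indepLabel n j := by
  rw [indepLabel, if_neg hj, mul_comm 2]
  exact Nat.mul_le_mul_left _ (by omega)

lemma indepLabel_injective (n m : ℕ) : Injective (indepLabel n (m := m)) := by
  intro j j' h
  by_cases hj : (j : ℕ) = 0 <;> by_cases hj' : (j' : ℕ) = 0
  · exact Fin.ext (hj.trans hj'.symm)
  · have := two_mul_le_indepLabel (n := n) hj'; rw [← h, indepLabel, if_pos hj] at this; omega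
  · have := two_mul_le_indepLabel (n := n) hj; rw [h, indepLabel, if_pos hj'] at this; omega
  · rw [indepLabel, indepLabel, if_neg hj, if_neg hj'] at h
    exact Fin.ext (by simpa using Nat.eq_of_mul_eq_mul_left n.succ_pos h)

lemma starJoinLabel_injective {n : ℕ} (hn : 0 < n) (m : ℕ) : Injective (starJoinLabel n m) := by
  refine (starLabel_injective n).sumElim (indepLabel_injective n m) fun i j h => ?_
  have := starLabel_mem n i
  by_cases hj : (j : ℕ) = 0
  · rw [indepLabel, if_pos hj] at h; simp only [Set.mem_Icc] at this; omega
  · have := two_mul_le_indepLabel (n := n) hj; simp only [Set.mem_Icc] at *; omega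

lemma starJoinLabel_mem {n m : ℕ} (hm : 2 ≤ m) (v : Fin (n + 1) ⊕ Fin m) :
    starJoinLabel n m v ∈ Set.Icc 1 ((n + 1) * m) := by
  have h2m : (n + 1) * 2 ≤ (n + 1) * m := Nat.mul_le_mul_left _ hm
  rcases v with i | j
  · have := starLabel_mem n i
    simp only [starJoinLabel, Sum.elim_inl, Set.mem_Icc] at *
    omega
  · simp only [starJoinLabel, Sum.elim_inr, indepLabel, Set.mem_Icc]
    split_ifs
    · omega
    · exact ⟨Nat.one_le_iff_ne_zero.2 (by positivity), Nat.mul_le_mul_left _ j.is_lt⟩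

lemma edgeSum_starJoinEdge_inl (n m : ℕ) (i : Fin n) :
    edgeSum (starJoinLabel n m) (starJoinEdge n m (.inl i)) = n + 4 + i := by
  simp [starJoinEdge, starJoinLabel, starLabel]
  omega

lemma edgeSum_starJoinEdge_inr (n m : ℕ) (i : Fin (n + 1)) (j : Fin m) :
    edgeSum (starJoinLabel n m) (starJoinEdge n m (.inr (i, j))) =
      starLabel n i + indepLabel n j :=
  rfl

lemma starLabel_add_indepLabel_mem_of_eq_zero {n m : ℕ} (i : Fin (n + 1)) {j : Fin m}
    (hj : (j : ℕ) = 0) : starLabel n i + indepLabel n j ∈ Set.Icc 3 (n + 3) := by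
  have := starLabel_mem n i
  rw [indepLabel, if_pos hj]
  simp only [Set.mem_Icc] at *
  omega

lemma starLabel_add_indepLabel_mem_of_ne_zero {n m : ℕ} (i : Fin (n + 1)) {j : Fin m}
    (hj : (j : ℕ) ≠ 0) :
    starLabel n i + indepLabel n j ∈ Set.Icc (2 * n + 4) (n + 2 + (n + 1) * m) := by
  have := starLabel_mem n i
  have : (n + 1) * (j + 1) ≤ (n + 1) * m := Nat.mul_le_mul_left _ j.is_lt
  have := two_mul_le_indepLabel (n := n) hj
  rw [indepLabel, if_neg hj] at *
  simp only [Set.mem_Icc] at *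
  omega

lemma starLabel_add_indepLabel_injective (n m : ℕ) :
    Injective fun p : Fin (n + 1) × Fin m => starLabel n p.1 + indepLabel n p.2 := by
  rintro ⟨a, j⟩ ⟨a', j'⟩ h
  have ha := starLabel_mem n a
  have ha' := starLabel_mem n a'
  simp only [Set.mem_Icc] at ha ha'
  simp only [Prod.mk.injEq] at h ⊢
  by_cases hj : (j : ℕ) = 0 <;> by_cases hj' : (j' : ℕ) = 0
  · rw [indepLabel, indepLabel, if_pos hj, if_pos hj'] at h
    exact ⟨starLabel_injective n (by omega), Fin.ext (hj.trans hj'.symm)⟩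
  · have := starLabel_add_indepLabel_mem_of_eq_zero a hj
    have := starLabel_add_indepLabel_mem_of_ne_zero a' hj'
    simp only [Set.mem_Icc] at *; omega
  · have := starLabel_add_indepLabel_mem_of_ne_zero a hj
    have := starLabel_add_indepLabel_mem_of_eq_zero a' hj'
    simp only [Set.mem_Icc] at *; omega
  · rw [indepLabel, indepLabel, if_neg hj, if_neg hj'] at h
    obtain ⟨hq, hr⟩ := Nat.eq_and_eq_of_mul_add_eq_mul_add (b := n + 1)
      (q := j + 1) (q' := j' + 1)
      (r := starLabel n a - 2) (r' := starLabel n a' - 2) (by omega) (by omega) (by omega)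
    exact ⟨starLabel_injective n (by omega), Fin.ext (by omega)⟩

lemma add_four_ne_starLabel_add_indepLabel {n m : ℕ} (i : Fin n) (a : Fin (n + 1)) (j : Fin m) :
    n + 4 + i ≠ starLabel n a + indepLabel n j := by
  have := i.is_lt
  by_cases hj : (j : ℕ) = 0
  · have := starLabel_add_indepLabel_mem_of_eq_zero a hj; simp only [Set.mem_Icc] at this; omega
  · have := starLabel_add_indepLabel_mem_of_ne_zero a hj; simp only [Set.mem_Icc] at this; omega

lemma injective_edgeSum_starJoinEdge (n m : ℕ) :
    Injective (edgeSum (starJoinLabel n m) ∘ starJoinEdge n m) := by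
  rintro (i | ⟨a, j⟩) (i' | ⟨a', j'⟩) h <;>
    simp only [comp_apply, edgeSum_starJoinEdge_inl, edgeSum_starJoinEdge_inr] at h
  · rw [Fin.ext (by omega : (i : ℕ) = i')]
  · exact absurd h (add_four_ne_starLabel_add_indepLabel i a' j')
  · exact absurd h.symm (add_four_ne_starLabel_add_indepLabel i' a j)
  · rw [starLabel_add_indepLabel_injective n m (a₁ := (a, j)) (a₂ := (a', j')) h]

lemma edgeSum_starJoinEdge_mem {n m : ℕ} (hm : 0 < m) (x : Fin n ⊕ Fin (n + 1) × Fin m) :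
    edgeSum (starJoinLabel n m) (starJoinEdge n m x) ∈ Set.Ico 3 (3 + (n + (n + 1) * m)) := by
  have : (n + 1) * 1 ≤ (n + 1) * m := Nat.mul_le_mul_left _ hm
  rcases x with i | ⟨a, j⟩
  · rw [edgeSum_starJoinEdge_inl, Set.mem_Ico]
    omega
  · rw [edgeSum_starJoinEdge_inr, Set.mem_Ico]
    by_cases hj : (j : ℕ) = 0
    · have := starLabel_add_indepLabel_mem_of_eq_zero a hj; rw [Set.mem_Icc] at this; omega
    · have := starLabel_add_indepLabel_mem_of_ne_zero a hj; rw [Set.mem_Icc] at this; omega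

theorem isSEM_unionIsolated_starJoin {n m : ℕ} (hn : 0 < n) (hm : 2 ≤ m) :
    IsSEM (unionIsolated (starJoin n m) (n * (m - 1) - 1)) := by
  have hcard : Fintype.card (Fin (n + 1) ⊕ Fin m) + (n * (m - 1) - 1) = (n + 1) * m := by
    obtain ⟨k, rfl⟩ : ∃ k, m = k + 2 := ⟨m - 2, by omega⟩
    have : n ≤ n * (k + 1) := Nat.le_mul_of_pos_right n k.succ_pos
    have : (n + 1) * (k + 2) = n * (k + 1) + n + k + 2 := by ring
    simp only [Fintype.card_sum, Fintype.card_fin, show k + 2 - 1 = k + 1 by omega]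
    omega
  refine isSEM_unionIsolated_of_labeling _ _ (starJoinLabel_injective hn m)
    (fun v => hcard ▸ starJoinLabel_mem hm v) (s := 3) ?_ ?_
  · rw [← range_starJoinEdge]
    exact (injective_edgeSum_starJoinEdge n m).injOn_range
  · rw [ncard_edgeSet_starJoin, ← range_starJoinEdge]
    rintro _ ⟨x, rfl⟩
    exact edgeSum_starJoinEdge_mem (by omega) x

theorem le_of_isSEM_unionIsolated_starJoin {n m t : ℕ}
    (h : IsSEM (unionIsolated (starJoin n m) t)) : ((n - 1) * (m - 1) + 1) / 2 ≤ t := by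
  have := h.ncard_edgeSet_le
  rw [ncard_edgeSet_unionIsolated, ncard_edgeSet_starJoin] at this
  simp only [Fintype.card_sum, Fintype.card_fin] at this
  rcases n with _ | a
  · simp
  rcases m with _ | b
  · simp
  simp only [Nat.add_sub_cancel]
  ring_nf at this ⊢
  omega

/-- for `n, m ≥ 2`,
`⌈(n−1)(m−1)/2⌉ ≤ μₛ(K_{1,n} + K̄_m) ≤ n(m−1) − 1`. -/
theorem stmt14 (n m : ℕ) (hn : 2 ≤ n) (hm : 2 ≤ m) :
    ((((n - 1) * (m - 1) + 1) / 2 : ℕ) : ℕ∞) ≤ semDeficiency (starJoin n m) ∧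
    semDeficiency (starJoin n m) ≤ ((n * (m - 1) - 1 : ℕ) : ℕ∞) := by
  refine ⟨le_sInf ?_, sInf_le ⟨_, isSEM_unionIsolated_starJoin (by omega) hm, rfl⟩⟩
  rintro _ ⟨t, ht, rfl⟩
  exact Nat.cast_le.2 <| le_of_isSEM_unionIsolated_starJoin ht
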